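/- Let n be a positive integer and let u : ℤ → ℝ be supported on {-n, ..., n}, symmetric (u(-k) = u(k) for all k), and normalized so that ∑_{k=-n}^{n} u(k) = 1. If sup over all nonzero f ∈ ℓ²(ℤ) of ‖∇(f*u)‖₂ / ‖f‖₂ equals 2/(2n+1), then u(k) = 1/(2n+1) for all k with |k| ≤ n. -/

import Mathlib

open scoped BigOperators

/-- Convolution of `f ∈ ℓ²(ℤ)` with a finitely supported kernel `u : ℤ → ℝ`:
`(f*u)(m) = ∑_{k} u(k) f(m-k)`. -/
noncomputable def conv (u : ℤ → ℝ) (f : ℤ → ℂ) : ℤ → ℂ :=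
  fun m => ∑' k : ℤ, (u k : ℂ) * f (m - k)

/-- The `ℓ²`-norm `(∑_{k∈ℤ} |f(k)|²)^{1/2}`. -/
noncomputable def l2norm (f : ℤ → ℂ) : ℝ :=
  Real.sqrt (∑' k : ℤ, ‖f k‖ ^ 2)

/-- The discrete derivative `(∇f)(k) = f(k+1) - f(k)`. -/
def dgrad (f : ℤ → ℂ) : ℤ → ℂ := fun k => f (k + 1) - f k

/-- The discrete Laplacian `(Δf)(k) = f(k+2) - 2f(k+1) + f(k)`. -/
def dlap (f : ℤ → ℂ) : ℤ → ℂ := fun k => f (k + 2) - 2 * f (k + 1) + f k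

open Real Finset

/-!
Put `N = 2n + 1`, `w θ = ∑ u k cos kθ`, and let `D θ = ∑_{|k| ≤ n} cos kθ` be the Dirichlet
kernel. Testing the `ℓ²` bound on long truncated plane waves `m ↦ e^{imθ}` gives the multiplier
bound `2 |sin (θ/2)| |w θ| ≤ 2 / N` for every `θ`. At the nodes `θ_j = (2j+1)π/N`, `j < N`,
one has `|sin (θ_j/2) D θ_j| = |sin (N θ_j / 2)| = 1`, hence `|w θ_j| ≤ |D θ_j| / N`. By the
discrete orthogonality of the `cos kθ_j`, `|k| ≤ n`, both `∑_j D θ_j w θ_j` and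
`∑_j D θ_j ^ 2 / N` equal `N`, so the bound is an equality at every node: `w θ_j = D θ_j / N`
(M. Riesz's interpolation proof of Bernstein's inequality, run in the equality case). Reading
off cosine coefficients by orthogonality once more gives `u k + u (-k) = 2 / N`.
-/

noncomputable def cosTransform (n : ℕ) (u : ℤ → ℝ) (θ : ℝ) : ℝ :=
  ∑ k ∈ Icc (-(n : ℤ)) n, u k * cos (k * θ)

theorem two_sin_mul_sum_range_cos (x a : ℝ) (N : ℕ) :
    2 * sin x * ∑ j ∈ range N, cos (a + 2 * j * x)
      = sin (a + (2 * N - 1) * x) + sin (x - a) := by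
  have hstep : ∀ j : ℕ, 2 * sin x * cos (a + 2 * j * x)
      = sin (a + (2 * ((j + 1 : ℕ) : ℝ) - 1) * x) - sin (a + (2 * (j : ℝ) - 1) * x) := by
    intro j
    rw [two_mul_sin_mul_cos, show x - (a + 2 * j * x) = -(a + (2 * j - 1) * x) by ring, sin_neg]
    push_cast
    ring_nf
  rw [mul_sum, sum_congr rfl fun j _ => hstep j,
    sum_range_sub (fun j : ℕ => sin (a + (2 * (j : ℝ) - 1) * x)), Nat.cast_zero,
    show a + (2 * 0 - 1) * x = -(x - a) by ring, sin_neg, sub_neg_eq_add]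

theorem sum_Icc_neg_eq_sum_range {M : Type*} [AddCommMonoid M] (n : ℕ) (f : ℤ → M) :
    ∑ k ∈ Icc (-(n : ℤ)) n, f k = ∑ j ∈ range (2 * n + 1), f (j - n) := by
  refine sum_nbij' (fun k : ℤ => (k + n).toNat) (fun j : ℕ => (j : ℤ) - n) ?_ ?_ ?_ ?_ ?_
  all_goals intro a ha
  all_goals simp only [mem_Icc, mem_range] at ha ⊢
  all_goals first | omega | (congr 1; omega)

theorem sin_half_mul_cosTransform_one (n : ℕ) (θ : ℝ) :
    sin (θ / 2) * cosTransform n 1 θ = sin ((2 * n + 1) * θ / 2) := by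
  have h := two_sin_mul_sum_range_cos (θ / 2) (-n * θ) (2 * n + 1)
  have hterm : ∀ j : ℕ, cos (((j : ℤ) - n : ℤ) * θ) = cos (-n * θ + 2 * j * (θ / 2)) := by
    intro j; push_cast; ring_nf
  simp only [cosTransform, Pi.one_apply, one_mul, sum_Icc_neg_eq_sum_range, hterm]
  rw [show -n * θ + (2 * ((2 * n + 1 : ℕ) : ℝ) - 1) * (θ / 2) = (2 * n + 1) * θ / 2 by
      push_cast; ring,
    show θ / 2 - -n * θ = (2 * n + 1) * θ / 2 by ring] at h
  linarith

noncomputable def node (N j : ℕ) : ℝ := (2 * j + 1) * π / N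

theorem sum_range_cos_int_mul_node {N : ℕ} {c : ℤ} (hc : ¬ (N : ℤ) ∣ c) :
    ∑ j ∈ range N, cos (c * node N j) = 0 := by
  rcases Nat.eq_zero_or_pos N with rfl | hN
  · simp
  have hN' : (N : ℝ) ≠ 0 := by positivity
  have h := two_sin_mul_sum_range_cos (c * π / N) (c * π / N) N
  have hsin : sin (c * π / N) ≠ 0 := by
    rw [Ne, sin_eq_zero_iff]
    rintro ⟨m, hm⟩
    refine hc ⟨m, ?_⟩
    field_simp at hm
    exact_mod_cast (by linarith : (c : ℝ) = N * m)
  have e : c * π / N + (2 * N - 1) * (c * π / N) = ((2 * c : ℤ) : ℝ) * π := by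
    push_cast; field_simp; ring
  rw [e, sin_int_mul_pi, sub_self, sin_zero, add_zero] at h
  have hterm : ∀ j : ℕ, cos (c * node N j) = cos (c * π / N + 2 * j * (c * π / N)) := by
    intro j; unfold node; ring_nf
  simp only [hterm]
  exact (mul_eq_zero.mp h).resolve_left (mul_ne_zero two_ne_zero hsin)

theorem sum_range_cos_int_mul_node_of_abs_lt {N : ℕ} {c : ℤ} (hc : |c| < N) :
    ∑ j ∈ range N, cos (c * node N j) = if c = 0 then (N : ℝ) else 0 := by
  split_ifs with h
  · simp [h]
  · exact sum_range_cos_int_mul_node fun hdvd => h (Int.eq_zero_of_abs_lt_dvd hdvd hc)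

theorem sum_range_cos_mul_cos_node {n : ℕ} {k m : ℤ} (hk : |k| ≤ n) (hm : |m| ≤ n) :
    ∑ j ∈ range (2 * n + 1), cos (k * node (2 * n + 1) j) * cos (m * node (2 * n + 1) j)
      = (2 * n + 1) / 2 * ((if k = m then 1 else 0) + (if k = -m then 1 else 0)) := by
  have hprod : ∀ j, cos (k * node (2 * n + 1) j) * cos (m * node (2 * n + 1) j)
      = (cos ((k - m : ℤ) * node (2 * n + 1) j)
          + cos ((k + m : ℤ) * node (2 * n + 1) j)) / 2 := by
    intro j
    rw [eq_div_iff two_ne_zero, mul_comm, ← mul_assoc, two_mul_cos_mul_cos]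
    push_cast
    ring_nf
  have hlt : ∀ c : ℤ, |c| ≤ 2 * n → |c| < ((2 * n + 1 : ℕ) : ℤ) := fun c hc => by
    push_cast; omega
  rw [sum_congr rfl fun j _ => hprod j, ← sum_div, sum_add_distrib,
    sum_range_cos_int_mul_node_of_abs_lt (hlt _ (by rw [abs_le] at *; omega)),
    sum_range_cos_int_mul_node_of_abs_lt (hlt _ (by rw [abs_le] at *; omega))]
  simp only [sub_eq_zero, ← eq_neg_iff_add_eq_zero]
  push_cast
  split_ifs <;> ring

theorem sum_range_cosTransform_mul_cos_node {n : ℕ} (u : ℤ → ℝ) {m : ℤ} (hm : |m| ≤ n) :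
    ∑ j ∈ range (2 * n + 1),
        cosTransform n u (node (2 * n + 1) j) * cos (m * node (2 * n + 1) j)
      = (2 * n + 1) / 2 * (u m + u (-m)) := by
  have hmem : ∀ k : ℤ, |k| ≤ n → k ∈ Icc (-(n : ℤ)) n := fun k hk => mem_Icc.2 (abs_le.1 hk)
  simp only [cosTransform, sum_mul, mul_assoc]
  rw [sum_comm]
  simp only [← mul_sum]
  rw [sum_congr rfl fun k hk => by
    rw [sum_range_cos_mul_cos_node (abs_le.2 (mem_Icc.1 hk)) hm]]
  simp only [mul_add, mul_ite, mul_one, mul_zero, sum_add_distrib, sum_ite_eq',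
    if_pos (hmem m hm), if_pos (hmem (-m) (by rwa [abs_neg]))]
  ring

theorem sum_range_cosTransform_one_mul_cos_node {n : ℕ} {m : ℤ} (hm : |m| ≤ n) :
    ∑ j ∈ range (2 * n + 1),
        cosTransform n 1 (node (2 * n + 1) j) * cos (m * node (2 * n + 1) j) = 2 * n + 1 := by
  rw [sum_range_cosTransform_mul_cos_node 1 hm, Pi.one_apply, Pi.one_apply]
  ring

theorem sum_range_cosTransform_one_mul_cosTransform_node (n : ℕ) (u : ℤ → ℝ) :
    ∑ j ∈ range (2 * n + 1),
        cosTransform n 1 (node (2 * n + 1) j) * cosTransform n u (node (2 * n + 1) j)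
      = (2 * n + 1) * ∑ k ∈ Icc (-(n : ℤ)) n, u k := by
  have hw : ∀ θ, cosTransform n u θ = ∑ k ∈ Icc (-(n : ℤ)) n, u k * cos (k * θ) := fun _ => rfl
  simp only [hw, mul_sum]
  rw [sum_comm]
  refine sum_congr rfl fun k hk => ?_
  simp only [mul_left_comm _ (u k), ← mul_sum]
  rw [sum_range_cosTransform_one_mul_cos_node (abs_le.2 (mem_Icc.1 hk)), mul_comm]

theorem abs_sin_half_node_mul_abs_cosTransform_one (n j : ℕ) :
    |sin (node (2 * n + 1) j / 2)| * |cosTransform n 1 (node (2 * n + 1) j)| = 1 := by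
  rw [← abs_mul, sin_half_mul_cosTransform_one]
  have hcos : cos ((2 * n + 1) * node (2 * n + 1) j / 2) = 0 := by
    rw [cos_eq_zero_iff]
    refine ⟨j, ?_⟩
    unfold node
    push_cast
    field_simp
  have h := sin_sq_add_cos_sq ((2 * n + 1) * node (2 * n + 1) j / 2)
  rw [hcos] at h
  exact ((sq_eq_sq_iff_abs_eq_abs _ 1).1 (by linarith)).trans abs_one

theorem abs_cosTransform_node_mul_le {n : ℕ} {u : ℤ → ℝ}
    (hbound : ∀ θ, |sin (θ / 2) * cosTransform n u θ| ≤ 1 / (2 * n + 1)) (j : ℕ) :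
    |cosTransform n u (node (2 * n + 1) j)| * (2 * n + 1)
      ≤ |cosTransform n 1 (node (2 * n + 1) j)| := by
  have hb := hbound (node (2 * n + 1) j)
  rw [abs_mul, le_div_iff₀ (by positivity)] at hb
  calc |cosTransform n u (node (2 * n + 1) j)| * (2 * n + 1)
      = |sin (node (2 * n + 1) j / 2)| * |cosTransform n u (node (2 * n + 1) j)| * (2 * n + 1)
          * |cosTransform n 1 (node (2 * n + 1) j)| := by
        rw [mul_right_comm _ _ (|cosTransform n 1 _|), mul_right_comm _ _ (|cosTransform n 1 _|),
          abs_sin_half_node_mul_abs_cosTransform_one, one_mul]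
    _ ≤ 1 * |cosTransform n 1 (node (2 * n + 1) j)| := by gcongr
    _ = |cosTransform n 1 (node (2 * n + 1) j)| := one_mul _

theorem eq_div_of_abs_mul_le_of_sum_mul_eq {ι : Type*} {s : Finset ι} {D W : ι → ℝ} {N : ℝ}
    (hN : 0 < N) (hle : ∀ i ∈ s, |W i| * N ≤ |D i|)
    (hsum : ∑ i ∈ s, D i * W i = ∑ i ∈ s, D i ^ 2 / N) {i : ι} (hi : i ∈ s) (hDi : D i ≠ 0) :
    W i = D i / N := by
  have hnonneg : ∀ i ∈ s, 0 ≤ D i ^ 2 / N - D i * W i := fun i hi => by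
    rw [sub_nonneg, le_div_iff₀ hN, ← sq_abs]
    calc D i * W i * N ≤ |D i| * (|W i| * N) := by
          rw [← mul_assoc, ← abs_mul]; exact mul_le_mul_of_nonneg_right (le_abs_self _) hN.le
      _ ≤ |D i| ^ 2 := by rw [sq]; exact mul_le_mul_of_nonneg_left (hle i hi) (abs_nonneg _)
  have hzero :=
    (sum_eq_zero_iff_of_nonneg hnonneg).1 (by rw [sum_sub_distrib, hsum, sub_self]) i hi
  field_simp at hzero ⊢
  have := (mul_eq_zero.1 (show D i * (D i - W i * N) = 0 by linear_combination hzero)).resolve_left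
    hDi
  linarith

theorem cosTransform_node_eq_of_abs_sin_half_mul_le {n : ℕ} {u : ℤ → ℝ}
    (hsum : ∑ k ∈ Icc (-(n : ℤ)) n, u k = 1)
    (hbound : ∀ θ, |sin (θ / 2) * cosTransform n u θ| ≤ 1 / (2 * n + 1)) {j : ℕ}
    (hj : j < 2 * n + 1) :
    cosTransform n u (node (2 * n + 1) j)
      = cosTransform n 1 (node (2 * n + 1) j) / (2 * n + 1) := by
  refine eq_div_of_abs_mul_le_of_sum_mul_eq (by positivity)
    (fun i _ => abs_cosTransform_node_mul_le hbound i) ?_ (mem_range.2 hj) fun h => by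
      simpa [h] using abs_sin_half_node_mul_abs_cosTransform_one n j
  have hDD := sum_range_cosTransform_one_mul_cosTransform_node n 1
  simp only [Pi.one_apply, sum_const, Int.card_Icc, nsmul_eq_mul, mul_one,
    show ((n : ℤ) + 1 - -n).toNat = 2 * n + 1 by omega] at hDD
  push_cast at hDD
  rw [sum_range_cosTransform_one_mul_cosTransform_node, hsum, ← sum_div]
  simp only [sq, hDD]
  field_simp

theorem le_of_mem_of_sSup_eq_of_ne_zero {S : Set ℝ} {c r : ℝ} (hc : c ≠ 0) (h : sSup S = c)
    (hr : r ∈ S) : r ≤ c := by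
  have hbdd : BddAbove S := by
    by_contra hb
    exact hc (h ▸ Real.sSup_of_not_bddAbove hb)
  exact h ▸ le_csSup hbdd hr

theorem le_of_forall_nat_mul_le {x y a : ℝ} (h : ∀ M : ℕ, M * x ≤ (M + a) * y) : x ≤ y := by
  by_contra! hxy
  obtain ⟨M, hM⟩ := exists_nat_gt (a * y / (x - y))
  rw [div_lt_iff₀ (sub_pos.2 hxy)] at hM
  linarith [h M]

theorem conv_eq_sum {n : ℕ} {u : ℤ → ℝ} (hsupp : ∀ k : ℤ, (n : ℤ) < |k| → u k = 0)
    (g : ℤ → ℂ) (m : ℤ) : conv u g m = ∑ k ∈ Icc (-(n : ℤ)) n, (u k : ℂ) * g (m - k) := by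
  refine tsum_eq_sum fun k hk => ?_
  rw [hsupp k (lt_of_not_ge fun h => hk (mem_Icc.2 (abs_le.1 h))), Complex.ofReal_zero, zero_mul]

theorem dgrad_conv_eq_zero {n : ℕ} {u : ℤ → ℝ} (hsupp : ∀ k : ℤ, (n : ℤ) < |k| → u k = 0)
    {g : ℤ → ℂ} {a b : ℤ} (hg : ∀ k ∉ Icc a b, g k = 0) {m : ℤ}
    (hm : m ∉ Icc (a - n - 1) (b + n)) : dgrad (conv u g) m = 0 := by
  have hconv : ∀ m' ∉ Icc (a - n) (b + n), conv u g m' = 0 := by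
    intro m' hm'
    rw [conv_eq_sum hsupp]
    refine sum_eq_zero fun k hk => ?_
    rw [hg, mul_zero]
    simp only [mem_Icc] at hk hm' ⊢
    omega
  simp only [mem_Icc] at hm
  rw [dgrad, hconv, hconv, sub_zero] <;> simp only [mem_Icc] <;> omega

theorem sq_l2norm_eq_sum {f : ℤ → ℂ} {s : Finset ℤ} (hf : ∀ k ∉ s, f k = 0) :
    l2norm f ^ 2 = ∑ k ∈ s, ‖f k‖ ^ 2 := by
  rw [l2norm, Real.sq_sqrt (tsum_nonneg fun _ => by positivity)]
  exact tsum_eq_sum fun k hk => by rw [hf k hk, norm_zero, sq, mul_zero]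

noncomputable def fourierSymbol (n : ℕ) (u : ℤ → ℝ) (θ : ℝ) : ℂ :=
  ∑ k ∈ Icc (-(n : ℤ)) n, (u k : ℂ) * Complex.exp (↑(-(k * θ)) * Complex.I)

theorem re_fourierSymbol (n : ℕ) (u : ℤ → ℝ) (θ : ℝ) :
    (fourierSymbol n u θ).re = cosTransform n u θ := by
  simp only [fourierSymbol, cosTransform, Complex.re_sum, Complex.re_ofReal_mul,
    Complex.exp_ofReal_mul_I_re, cos_neg]

noncomputable def wavePacket (θ : ℝ) (L : ℕ) (m : ℤ) : ℂ :=
  if m ∈ Icc 0 (L : ℤ) then Complex.exp (↑(m * θ) * Complex.I) else 0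

theorem wavePacket_eq_zero {θ : ℝ} {L : ℕ} {m : ℤ} (hm : m ∉ Icc 0 (L : ℤ)) :
    wavePacket θ L m = 0 :=
  if_neg hm

theorem memℓp_wavePacket (θ : ℝ) (L : ℕ) : Memℓp (wavePacket θ L) 2 :=
  memℓp_gen (summable_of_ne_finset_zero (s := Icc 0 (L : ℤ)) fun m hm => by
    simp [wavePacket_eq_zero hm])

theorem wavePacket_ne_zero (θ : ℝ) (L : ℕ) : wavePacket θ L ≠ 0 := by
  intro h
  have := congrFun h 0
  simp [wavePacket] at this

theorem sq_l2norm_wavePacket (θ : ℝ) (L : ℕ) : l2norm (wavePacket θ L) ^ 2 = L + 1 := by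
  rw [sq_l2norm_eq_sum fun m => wavePacket_eq_zero,
    sum_congr rfl fun m hm => by
      rw [wavePacket, if_pos hm, Complex.norm_exp_ofReal_mul_I, one_pow],
    sum_const, Int.card_Icc, show ((L : ℤ) + 1 - 0).toNat = L + 1 by omega, nsmul_eq_mul,
    mul_one, Nat.cast_succ]

theorem dgrad_conv_wavePacket {n : ℕ} {u : ℤ → ℝ} (hsupp : ∀ k : ℤ, (n : ℤ) < |k| → u k = 0)
    (θ : ℝ) {L : ℕ} {m : ℤ} (h1 : (n : ℤ) ≤ m) (h2 : m + 1 + n ≤ L) :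
    dgrad (conv u (wavePacket θ L)) m = Complex.exp (↑(m * θ) * Complex.I)
      * ((Complex.exp (↑θ * Complex.I) - 1) * fourierSymbol n u θ) := by
  have hconv : ∀ m' : ℤ, (n : ℤ) ≤ m' → m' + n ≤ L → conv u (wavePacket θ L) m'
      = Complex.exp (↑(m' * θ) * Complex.I) * fourierSymbol n u θ := by
    intro m' h1' h2'
    rw [conv_eq_sum hsupp, fourierSymbol, mul_sum]
    refine sum_congr rfl fun k hk => ?_
    simp only [mem_Icc] at hk
    rw [wavePacket, if_pos (mem_Icc.2 ⟨by omega, by omega⟩), mul_left_comm, ← Complex.exp_add]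
    push_cast
    ring_nf
  have hshift : Complex.exp (↑((m + 1 : ℤ) * θ) * Complex.I)
      = Complex.exp (↑(m * θ) * Complex.I) * Complex.exp (↑θ * Complex.I) := by
    rw [← Complex.exp_add]; push_cast; ring_nf
  rw [dgrad, hconv m h1 (by omega), hconv (m + 1) (by omega) (by omega), hshift]
  ring

theorem norm_exp_sub_one_mul_fourierSymbol_le {n : ℕ} {u : ℤ → ℝ}
    (hsupp : ∀ k : ℤ, (n : ℤ) < |k| → u k = 0) {C : ℝ} (hC0 : 0 ≤ C)
    (hC : ∀ f : ℤ → ℂ, Memℓp f 2 → f ≠ 0 → l2norm (dgrad (conv u f)) / l2norm f ≤ C)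
    (θ : ℝ) : ‖(Complex.exp (↑θ * Complex.I) - 1) * fourierSymbol n u θ‖ ≤ C := by
  set s := ‖(Complex.exp (↑θ * Complex.I) - 1) * fourierSymbol n u θ‖
  suffices h : ∀ M : ℕ, M * s ^ 2 ≤ (M + (2 * n + 1)) * C ^ 2 from
    (pow_le_pow_iff_left₀ (norm_nonneg _) hC0 two_ne_zero).1 (le_of_forall_nat_mul_le h)
  intro M
  set f := wavePacket θ (M + 2 * n)
  have hlower : M * s ^ 2 ≤ l2norm (dgrad (conv u f)) ^ 2 := by
    rw [sq_l2norm_eq_sum fun m => dgrad_conv_eq_zero hsupp (fun k => wavePacket_eq_zero) (m := m)]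
    calc (M : ℝ) * s ^ 2 = ∑ m ∈ Ico (n : ℤ) (n + M), ‖dgrad (conv u f) m‖ ^ 2 := by
          rw [sum_congr rfl fun m hm => by
            rw [dgrad_conv_wavePacket hsupp θ (mem_Ico.1 hm).1
                (by push_cast; linarith [(mem_Ico.1 hm).2]),
              norm_mul, Complex.norm_exp_ofReal_mul_I, one_mul]]
          rw [sum_const, Int.card_Ico, show ((n : ℤ) + M - n).toNat = M by omega, nsmul_eq_mul]
      _ ≤ _ := sum_le_sum_of_subset_of_nonneg (fun m hm => by
            simp only [mem_Ico, mem_Icc] at hm ⊢; push_cast; omega) fun _ _ _ => by positivity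
  have hupper : l2norm (dgrad (conv u f)) ^ 2 ≤ C ^ 2 * (M + (2 * n + 1)) := by
    have hf2 : l2norm f ^ 2 = M + (2 * n + 1) := by
      rw [sq_l2norm_wavePacket]; push_cast; ring
    have hfpos : 0 < l2norm f := lt_of_pow_lt_pow_left₀ 2 (Real.sqrt_nonneg _)
      (by rw [hf2, zero_pow two_ne_zero]; positivity)
    have hg := (div_le_iff₀ hfpos).1 (hC f (memℓp_wavePacket _ _) (wavePacket_ne_zero _ _))
    calc l2norm (dgrad (conv u f)) ^ 2 ≤ (C * l2norm f) ^ 2 :=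
          pow_le_pow_left₀ (Real.sqrt_nonneg _) hg 2
      _ = C ^ 2 * (M + (2 * n + 1)) := by rw [mul_pow, hf2]
  linarith

theorem abs_sin_half_mul_cosTransform_le {n : ℕ} {u : ℤ → ℝ}
    (hsupp : ∀ k : ℤ, (n : ℤ) < |k| → u k = 0) {C : ℝ} (hC0 : 0 ≤ C)
    (hC : ∀ f : ℤ → ℂ, Memℓp f 2 → f ≠ 0 → l2norm (dgrad (conv u f)) / l2norm f ≤ C)
    (θ : ℝ) : |sin (θ / 2) * cosTransform n u θ| ≤ C / 2 := by
  have h := norm_exp_sub_one_mul_fourierSymbol_le hsupp hC0 hC θ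
  rw [norm_mul, mul_comm (θ : ℂ), Complex.norm_exp_I_mul_ofReal_sub_one, Real.norm_eq_abs,
    abs_mul, abs_two] at h
  rw [abs_mul, le_div_iff₀ two_pos, ← re_fourierSymbol]
  calc |sin (θ / 2)| * |(fourierSymbol n u θ).re| * 2
      ≤ 2 * |sin (θ / 2)| * ‖fourierSymbol n u θ‖ := by
        rw [mul_comm, ← mul_assoc]; gcongr; exact Complex.abs_re_le_norm _
    _ ≤ C := h

theorem smoothest_average_first_derivative_equality_case
    (n : ℕ) (u : ℤ → ℝ)
    (hsupp : ∀ k : ℤ, (n : ℤ) < |k| → u k = 0)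
    (hsymm : ∀ k : ℤ, u (-k) = u k)
    (hnorm : ∑ k ∈ Finset.Icc (-(n : ℤ)) (n : ℤ), u k = 1)
    (heq : sSup {r : ℝ | ∃ f : ℤ → ℂ, Memℓp f 2 ∧ f ≠ 0 ∧
        r = l2norm (dgrad (conv u f)) / l2norm f} = 2 / (2 * (n : ℝ) + 1)) :
    ∀ k : ℤ, |k| ≤ (n : ℤ) → u k = 1 / (2 * (n : ℝ) + 1) := by
  have hratio : ∀ f : ℤ → ℂ, Memℓp f 2 → f ≠ 0 →
      l2norm (dgrad (conv u f)) / l2norm f ≤ 2 / (2 * n + 1) := fun f hf hf0 =>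
    le_of_mem_of_sSup_eq_of_ne_zero (by positivity) heq ⟨f, hf, hf0, rfl⟩
  have hnodes : ∀ j ∈ range (2 * n + 1), cosTransform n u (node (2 * n + 1) j)
      = cosTransform n 1 (node (2 * n + 1) j) / (2 * n + 1) := fun j hj =>
    cosTransform_node_eq_of_abs_sin_half_mul_le hnorm (fun θ =>
      (abs_sin_half_mul_cosTransform_le hsupp (by positivity) hratio θ).trans_eq (by ring))
      (mem_range.1 hj)
  intro k hk
  have hu := sum_range_cosTransform_mul_cos_node u hk
  rw [sum_congr rfl fun j hj => by rw [hnodes j hj, div_mul_eq_mul_div], ← sum_div,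
    sum_range_cosTransform_one_mul_cos_node hk, hsymm] at hu
  field_simp at hu ⊢
  linarith
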